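/- (Ostrowski's theorem.) Let A and S be p×p real matrices with A symmetric and S nonsingular. List the eigenvalues of A in nondecreasing order λ_1(A) ≤ ⋯ ≤ λ_p(A), and likewise the eigenvalues of S A Sᵀ in nondecreasing order. Let σ_min(S) and σ_max(S) denote the smallest and largest singular values of S. Then for each j = 1, …, p there exists a positive real number ζ_j with σ_min(S)² ≤ ζ_j ≤ σ_max(S)² such that λ_j(S A Sᵀ) = ζ_j · λ_j(A). -/

import Mathlib

/-
Let `ν j`, `μ j` be the `j`-th smallest eigenvalues of `S A Sᵀ` and of `A`. The quadratic form of
`S A Sᵀ` at `x` is that of `A` at `Sᵀ x`. Pulling back through `Sᵀ` the span of the first `j + 1`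
eigenvectors of `A` gives a subspace of dimension `j + 1`, which by dimension counting meets the
span of the last `p - j` eigenvectors of `S A Sᵀ`; a nonzero `x` in the intersection satisfies
`ν j ‖x‖² ≤ μ j ‖Sᵀ x‖²`. Symmetrically some `y ≠ 0` has `μ j ‖Sᵀ y‖² ≤ ν j ‖y‖²`. Since
`‖Sᵀ x‖² / ‖x‖²` lies in `[σ_min(S)², σ_max(S)²]`, `ν j` lies between two multiples of `μ j` by
factors in that interval, hence is itself such a multiple.
-/

open Matrix

/-- The Euclidean norm on `ℝ^p` (vectors identified with `Fin p → ℝ`). -/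
noncomputable def euclNorm {p : ℕ} (x : Fin p → ℝ) : ℝ := Real.sqrt (∑ i, x i ^ 2)

/-- The smallest singular value of a real matrix `S`, characterized as the infimum of
`‖S x‖ / ‖x‖` over nonzero `x`. -/
noncomputable def sigmaMin {p : ℕ} (S : Matrix (Fin p) (Fin p) ℝ) : ℝ :=
  ⨅ x : {x : Fin p → ℝ // x ≠ 0}, euclNorm (S.mulVec x.1) / euclNorm x.1

/-- The largest singular value of a real matrix `S`, characterized as the supremum of
`‖S x‖ / ‖x‖` over nonzero `x`. -/
noncomputable def sigmaMax {p : ℕ} (S : Matrix (Fin p) (Fin p) ℝ) : ℝ :=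
  ⨆ x : {x : Fin p → ℝ // x ≠ 0}, euclNorm (S.mulVec x.1) / euclNorm x.1

open Module Submodule
open scoped RealInnerProductSpace

lemma exists_eq_mul_of_le_mul_of_mul_le {a b μ ν r₁ r₂ : ℝ} (ha : 0 < a)
    (hr₁ : r₁ ∈ Set.Icc a b) (hr₂ : r₂ ∈ Set.Icc a b) (h₁ : ν ≤ r₁ * μ) (h₂ : r₂ * μ ≤ ν) :
    ∃ ζ, 0 < ζ ∧ a ≤ ζ ∧ ζ ≤ b ∧ ν = ζ * μ := by
  rcases lt_trichotomy μ 0 with hμ | rfl | hμ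
  · have hlo : a ≤ ν / μ := by rw [le_div_iff_of_neg hμ]; nlinarith [hr₁.1]
    have hhi : ν / μ ≤ b := by rw [div_le_iff_of_neg hμ]; nlinarith [hr₂.2]
    exact ⟨ν / μ, ha.trans_le hlo, hlo, hhi, (div_mul_cancel₀ ν hμ.ne).symm⟩
  · exact ⟨a, ha, le_rfl, hr₁.1.trans hr₁.2, by linarith⟩
  · have hlo : a ≤ ν / μ := by rw [le_div_iff₀ hμ]; nlinarith [hr₂.1]
    have hhi : ν / μ ≤ b := by rw [div_le_iff₀ hμ]; nlinarith [hr₁.2]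
    exact ⟨ν / μ, ha.trans_le hlo, hlo, hhi, (div_mul_cancel₀ ν hμ.ne').symm⟩

lemma Submodule.exists_mem_inf_ne_zero_of_finrank_lt {K V : Type*} [DivisionRing K]
    [AddCommGroup V] [Module K V] [FiniteDimensional K V] {W₁ W₂ : Submodule K V}
    (h : finrank K V < finrank K W₁ + finrank K W₂) : ∃ x ∈ W₁ ⊓ W₂, x ≠ 0 := by
  refine exists_mem_ne_zero_of_ne_bot fun hbot => ?_
  have := finrank_sup_add_finrank_inf_eq W₁ W₂
  rw [hbot, finrank_bot] at this
  have := (W₁ ⊔ W₂).finrank_le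
  omega

namespace OrthonormalBasis

variable {ι E : Type*} [Fintype ι] [NormedAddCommGroup E] [InnerProductSpace ℝ E]
  (b : OrthonormalBasis ι ℝ E)

lemma finrank_span_image (s : Finset ι) : finrank ℝ (span ℝ (b '' s)) = s.card := by
  rw [Set.image_eq_range]
  exact (finrank_span_eq_card (b.orthonormal.linearIndependent.comp _
    Subtype.val_injective)).trans (Fintype.card_coe s)

lemma inner_eq_zero_of_mem_span_image {s : Set ι} {x : E} (hx : x ∈ span ℝ (b '' s)) {i : ι}
    (hi : i ∉ s) : ⟪b i, x⟫ = 0 := by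
  refine mem_orthogonal_singleton_iff_inner_right.1 (span_le.2 ?_ hx)
  rintro _ ⟨k, hk, rfl⟩
  exact mem_orthogonal_singleton_iff_inner_right.2
    (b.orthonormal.2 (ne_of_mem_of_not_mem hk hi).symm)

variable {T : E →L[ℝ] E} {μ : ι → ℝ}

lemma inner_apply_self_eq_sum (hT : ∀ i, T (b i) = μ i • b i) (x : E) :
    ⟪T x, x⟫ = ∑ i, μ i * ⟪b i, x⟫ ^ 2 := by
  nth_rewrite 1 [← b.sum_repr' x]
  simp only [map_sum, map_smul, hT, sum_inner, real_inner_smul_left, sq]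
  exact Finset.sum_congr rfl fun i _ => by ring

lemma inner_apply_self_le_of_mem_span (hT : ∀ i, T (b i) = μ i • b i) {s : Set ι} {c : ℝ}
    (hs : ∀ i ∈ s, μ i ≤ c) {x : E} (hx : x ∈ span ℝ (b '' s)) : ⟪T x, x⟫ ≤ c * ‖x‖ ^ 2 := by
  rw [b.inner_apply_self_eq_sum hT, ← b.sum_sq_inner_right, Finset.mul_sum]
  refine Finset.sum_le_sum fun i _ => ?_
  by_cases hi : i ∈ s
  · exact mul_le_mul_of_nonneg_right (hs i hi) (sq_nonneg _)
  · simp [b.inner_eq_zero_of_mem_span_image hx hi]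

lemma le_inner_apply_self_of_mem_span (hT : ∀ i, T (b i) = μ i • b i) {s : Set ι} {c : ℝ}
    (hs : ∀ i ∈ s, c ≤ μ i) {x : E} (hx : x ∈ span ℝ (b '' s)) : c * ‖x‖ ^ 2 ≤ ⟪T x, x⟫ := by
  rw [b.inner_apply_self_eq_sum hT, ← b.sum_sq_inner_right, Finset.mul_sum]
  refine Finset.sum_le_sum fun i _ => ?_
  by_cases hi : i ∈ s
  · exact mul_le_mul_of_nonneg_right (hs i hi) (sq_nonneg _)
  · simp [b.inner_eq_zero_of_mem_span_image hx hi]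

end OrthonormalBasis

section CourantFischer

variable {E : Type*} [NormedAddCommGroup E] [InnerProductSpace ℝ E] [FiniteDimensional ℝ E]
  {n : ℕ} (b : OrthonormalBasis (Fin n) ℝ E) {T : E →L[ℝ] E} {μ : Fin n → ℝ}

lemma exists_ne_zero_le_inner_apply_self (hT : ∀ i, T (b i) = μ i • b i) (hμ : Monotone μ)
    (j : Fin n) {W : Submodule ℝ E} (hW : (j : ℕ) + 1 ≤ finrank ℝ W) :
    ∃ x ∈ W, x ≠ 0 ∧ μ j * ‖x‖ ^ 2 ≤ ⟪T x, x⟫ := by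
  have hdim : finrank ℝ E < finrank ℝ W + finrank ℝ (span ℝ (b '' ↑(Finset.Ici j))) := by
    rw [b.finrank_span_image, Fin.card_Ici, finrank_eq_card_basis b.toBasis, Fintype.card_fin]
    omega
  obtain ⟨x, hx, hx0⟩ := exists_mem_inf_ne_zero_of_finrank_lt hdim
  exact ⟨x, hx.1, hx0, b.le_inner_apply_self_of_mem_span hT
    (fun i hi => hμ (Finset.mem_Ici.1 hi)) hx.2⟩

lemma exists_ne_zero_inner_apply_self_le (hT : ∀ i, T (b i) = μ i • b i) (hμ : Monotone μ)
    (j : Fin n) {W : Submodule ℝ E} (hW : n - (j : ℕ) ≤ finrank ℝ W) :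
    ∃ x ∈ W, x ≠ 0 ∧ ⟪T x, x⟫ ≤ μ j * ‖x‖ ^ 2 := by
  have hdim : finrank ℝ E < finrank ℝ W + finrank ℝ (span ℝ (b '' ↑(Finset.Iic j))) := by
    rw [b.finrank_span_image, Fin.card_Iic, finrank_eq_card_basis b.toBasis, Fintype.card_fin]
    omega
  obtain ⟨x, hx, hx0⟩ := exists_mem_inf_ne_zero_of_finrank_lt hdim
  exact ⟨x, hx.1, hx0, b.inner_apply_self_le_of_mem_span hT
    (fun i hi => hμ (Finset.mem_Iic.1 hi)) hx.2⟩

end CourantFischer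

lemma sq_norm_div_sq_norm_mem_Icc {E F : Type*} [NormedAddCommGroup E] [NormedAddCommGroup F]
    {L : E → F} {m K : ℝ}
    (hm : 0 ≤ m) (hLm : ∀ x, m * ‖x‖ ≤ ‖L x‖) (hLK : ∀ x, ‖L x‖ ≤ K * ‖x‖) {x : E} (hx : x ≠ 0) :
    ‖L x‖ ^ 2 / ‖x‖ ^ 2 ∈ Set.Icc (m ^ 2) (K ^ 2) := by
  have hx' : 0 < ‖x‖ ^ 2 := by positivity
  rw [Set.mem_Icc, le_div_iff₀ hx', div_le_iff₀ hx', ← mul_pow, ← mul_pow]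
  exact ⟨pow_le_pow_left₀ (by positivity) (hLm x) 2, pow_le_pow_left₀ (norm_nonneg _) (hLK x) 2⟩

theorem exists_eq_mul_of_inner_apply_self_eq {E : Type*} [NormedAddCommGroup E]
    [InnerProductSpace ℝ E] [FiniteDimensional ℝ E] {n : ℕ}
    {b c : OrthonormalBasis (Fin n) ℝ E} {M A L : E →L[ℝ] E} {ν μ : Fin n → ℝ}
    (hM : ∀ i, M (b i) = ν i • b i) (hν : Monotone ν)
    (hA : ∀ i, A (c i) = μ i • c i) (hμ : Monotone μ)
    (hMA : ∀ x, ⟪M x, x⟫ = ⟪A (L x), L x⟫) {m K : ℝ} (hm : 0 < m)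
    (hLm : ∀ x, m * ‖x‖ ≤ ‖L x‖) (hLK : ∀ x, ‖L x‖ ≤ K * ‖x‖) (j : Fin n) :
    ∃ ζ, 0 < ζ ∧ m ^ 2 ≤ ζ ∧ ζ ≤ K ^ 2 ∧ ν j = ζ * μ j := by
  have hL : Function.Injective L := by
    refine (injective_iff_map_eq_zero L).2 fun x hx => norm_eq_zero.1 ?_
    have := hLm x
    rw [hx, norm_zero] at this
    exact le_antisymm (nonpos_of_mul_nonpos_right this hm) (norm_nonneg x)
  set e := LinearEquiv.ofInjectiveEndo (L : E →ₗ[ℝ] E) hL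
  have he : ∀ x, e x = L x := fun _ => rfl
  obtain ⟨x₁, hx₁W, hx₁, h₁⟩ := exists_ne_zero_le_inner_apply_self b hM hν j
    (W := (span ℝ (c '' ↑(Finset.Iic j))).map (e.symm : E →ₗ[ℝ] E))
    (by rw [LinearEquiv.finrank_map_eq, c.finrank_span_image, Fin.card_Iic])
  obtain ⟨x₂, hx₂W, hx₂, h₂⟩ := exists_ne_zero_inner_apply_self_le b hM hν j
    (W := (span ℝ (c '' ↑(Finset.Ici j))).map (e.symm : E →ₗ[ℝ] E))
    (by rw [LinearEquiv.finrank_map_eq, c.finrank_span_image, Fin.card_Ici])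
  rw [mem_map_equiv, LinearEquiv.symm_symm, he] at hx₁W hx₂W
  have h₁' := h₁.trans ((hMA x₁).trans_le (c.inner_apply_self_le_of_mem_span hA
    (fun i hi => hμ (Finset.mem_Iic.1 hi)) hx₁W))
  have h₂' := (c.le_inner_apply_self_of_mem_span hA
    (fun i hi => hμ (Finset.mem_Ici.1 hi)) hx₂W).trans ((hMA x₂).symm.trans_le h₂)
  refine exists_eq_mul_of_le_mul_of_mul_le (pow_pos hm 2)
    (sq_norm_div_sq_norm_mem_Icc hm.le hLm hLK hx₁)
    (sq_norm_div_sq_norm_mem_Icc hm.le hLm hLK hx₂) ?_ ?_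
  · rw [div_mul_eq_mul_div, le_div_iff₀ (by positivity)]; linarith
  · rw [div_mul_eq_mul_div, div_le_iff₀ (by positivity)]; linarith

namespace ContinuousLinearMap

variable {E F : Type*} [NormedAddCommGroup E] [InnerProductSpace ℝ E] [CompleteSpace E]
  [NormedAddCommGroup F] [InnerProductSpace ℝ F] [CompleteSpace F] {L : E →L[ℝ] F}

lemma norm_adjoint_apply_le {C : ℝ} (hC : 0 ≤ C) (h : ∀ x, ‖L x‖ ≤ C * ‖x‖) (y : F) :
    ‖adjoint L y‖ ≤ C * ‖y‖ :=
  (adjoint L).le_of_opNorm_le ((LinearIsometryEquiv.norm_map adjoint L).trans_le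
    (L.opNorm_le_bound hC h)) y

lemma mul_norm_le_norm_adjoint_apply (hL : Function.Surjective L) {c : ℝ}
    (h : ∀ x, c * ‖x‖ ≤ ‖L x‖) (y : F) : c * ‖y‖ ≤ ‖adjoint L y‖ := by
  rcases le_or_gt c 0 with hc | hc
  · exact (mul_nonpos_of_nonpos_of_nonneg hc (norm_nonneg y)).trans (norm_nonneg _)
  rcases (norm_nonneg y).eq_or_lt with hy | hy
  · rw [← hy, mul_zero]; exact norm_nonneg _
  obtain ⟨w, rfl⟩ := hL y
  have hw : ‖L w‖ ^ 2 ≤ ‖w‖ * ‖adjoint L (L w)‖ := by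
    rw [← real_inner_self_eq_norm_sq, ← adjoint_inner_right]
    exact real_inner_le_norm _ _
  refine le_of_mul_le_mul_left ?_ hy
  nlinarith [h w, norm_nonneg (adjoint L (L w))]

end ContinuousLinearMap

section SingularValues

variable {p : ℕ} (S : Matrix (Fin p) (Fin p) ℝ)

lemma euclNorm_eq_norm_toLp (v : Fin p → ℝ) : euclNorm v = ‖WithLp.toLp 2 v‖ := by
  simp [euclNorm, EuclideanSpace.norm_eq]

lemma euclNorm_mulVec_div_euclNorm (v : Fin p → ℝ) :
    euclNorm (S *ᵥ v) / euclNorm v =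
      ‖toEuclideanCLM (𝕜 := ℝ) S (WithLp.toLp 2 v)‖ / ‖WithLp.toLp 2 v‖ := by
  rw [euclNorm_eq_norm_toLp, euclNorm_eq_norm_toLp, toEuclideanCLM_toLp]

lemma norm_toEuclideanCLM_le_sigmaMax (x : EuclideanSpace ℝ (Fin p)) :
    ‖toEuclideanCLM (𝕜 := ℝ) S x‖ ≤ sigmaMax S * ‖x‖ := by
  rcases eq_or_ne x 0 with rfl | hx
  · simp
  have hbdd : BddAbove (Set.range fun z : {v : Fin p → ℝ // v ≠ 0} =>
      euclNorm (S *ᵥ z.1) / euclNorm z.1) := by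
    refine ⟨‖toEuclideanCLM (𝕜 := ℝ) S‖, Set.forall_mem_range.2 fun z => ?_⟩
    rw [euclNorm_mulVec_div_euclNorm]
    exact div_le_of_le_mul₀ (norm_nonneg _) (norm_nonneg _)
      ((toEuclideanCLM (𝕜 := ℝ) S).le_opNorm _)
  have := le_ciSup hbdd ⟨WithLp.ofLp x, by simpa using hx⟩
  rw [euclNorm_mulVec_div_euclNorm, div_le_iff₀ (norm_pos_iff.2 hx)] at this
  exact this

lemma sigmaMin_mul_norm_le (x : EuclideanSpace ℝ (Fin p)) :
    sigmaMin S * ‖x‖ ≤ ‖toEuclideanCLM (𝕜 := ℝ) S x‖ := by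
  rcases eq_or_ne x 0 with rfl | hx
  · simp
  have hbdd : BddBelow (Set.range fun z : {v : Fin p → ℝ // v ≠ 0} =>
      euclNorm (S *ᵥ z.1) / euclNorm z.1) :=
    ⟨0, Set.forall_mem_range.2 fun z => div_nonneg (Real.sqrt_nonneg _) (Real.sqrt_nonneg _)⟩
  have := ciInf_le hbdd ⟨WithLp.ofLp x, by simpa using hx⟩
  rw [euclNorm_mulVec_div_euclNorm, le_div_iff₀ (norm_pos_iff.2 hx)] at this
  exact this

variable {S : Matrix (Fin p) (Fin p) ℝ}

lemma toEuclideanCLM_nonsing_inv_apply (hS : IsUnit S.det) (x : EuclideanSpace ℝ (Fin p)) :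
    toEuclideanCLM (𝕜 := ℝ) S⁻¹ (toEuclideanCLM (𝕜 := ℝ) S x) = x := by
  rw [← mul_apply_eq_comp, ← map_mul, nonsing_inv_mul _ hS, map_one, one_apply_eq_self]

lemma toEuclideanCLM_apply_nonsing_inv (hS : IsUnit S.det) (x : EuclideanSpace ℝ (Fin p)) :
    toEuclideanCLM (𝕜 := ℝ) S (toEuclideanCLM (𝕜 := ℝ) S⁻¹ x) = x := by
  rw [← mul_apply_eq_comp, ← map_mul, mul_nonsing_inv _ hS, map_one, one_apply_eq_self]

lemma sigmaMin_pos (hp : 0 < p) (hS : IsUnit S.det) : 0 < sigmaMin S := by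
  -- `+ 1` makes `C` positive without having to show `S⁻¹ ≠ 0`.
  set C := ‖toEuclideanCLM (𝕜 := ℝ) S⁻¹‖ + 1
  have hC : 0 < C := by positivity
  have hle : ∀ x, ‖x‖ ≤ C * ‖toEuclideanCLM (𝕜 := ℝ) S x‖ := fun x =>
    calc ‖x‖ = ‖toEuclideanCLM (𝕜 := ℝ) S⁻¹ (toEuclideanCLM (𝕜 := ℝ) S x)‖ := by
          rw [toEuclideanCLM_nonsing_inv_apply hS]
      _ ≤ ‖toEuclideanCLM (𝕜 := ℝ) S⁻¹‖ * ‖toEuclideanCLM (𝕜 := ℝ) S x‖ :=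
          (toEuclideanCLM (𝕜 := ℝ) S⁻¹).le_opNorm _
      _ ≤ C * ‖toEuclideanCLM (𝕜 := ℝ) S x‖ := by gcongr; linarith
  have : Nonempty {v : Fin p → ℝ // v ≠ 0} :=
    ⟨⟨Pi.single ⟨0, hp⟩ 1, by simp [funext_iff, Pi.single_apply]⟩⟩
  refine (inv_pos.2 hC).trans_le (le_ciInf fun z => ?_)
  have hz : 0 < ‖WithLp.toLp 2 z.1‖ := norm_pos_iff.2 (by simpa using z.2)
  rw [euclNorm_mulVec_div_euclNorm, le_div_iff₀ hz, inv_mul_le_iff₀ hC]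
  exact hle _

lemma toEuclideanCLM_transpose (S : Matrix (Fin p) (Fin p) ℝ) :
    toEuclideanCLM (𝕜 := ℝ) Sᵀ = ContinuousLinearMap.adjoint (toEuclideanCLM (𝕜 := ℝ) S) := by
  rw [← conjTranspose_eq_transpose_of_trivial, ← star_eq_conjTranspose, map_star,
    ContinuousLinearMap.star_eq_adjoint]

lemma norm_toEuclideanCLM_transpose_le_sigmaMax (x : EuclideanSpace ℝ (Fin p)) :
    ‖toEuclideanCLM (𝕜 := ℝ) Sᵀ x‖ ≤ sigmaMax S * ‖x‖ := by
  have hσ : 0 ≤ sigmaMax S :=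
    Real.iSup_nonneg fun _ => div_nonneg (Real.sqrt_nonneg _) (Real.sqrt_nonneg _)
  rw [toEuclideanCLM_transpose]
  exact ContinuousLinearMap.norm_adjoint_apply_le hσ (norm_toEuclideanCLM_le_sigmaMax S) x

lemma sigmaMin_mul_norm_le_transpose (hS : IsUnit S.det) (x : EuclideanSpace ℝ (Fin p)) :
    sigmaMin S * ‖x‖ ≤ ‖toEuclideanCLM (𝕜 := ℝ) Sᵀ x‖ := by
  have hsurj : Function.Surjective (toEuclideanCLM (𝕜 := ℝ) S) := fun y =>
    ⟨_, toEuclideanCLM_apply_nonsing_inv hS y⟩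
  rw [toEuclideanCLM_transpose]
  exact ContinuousLinearMap.mul_norm_le_norm_adjoint_apply hsurj (sigmaMin_mul_norm_le S) x

end SingularValues

lemma inner_toEuclideanCLM_mul_mul_transpose {p : ℕ} (S A : Matrix (Fin p) (Fin p) ℝ)
    (x : EuclideanSpace ℝ (Fin p)) :
    ⟪toEuclideanCLM (𝕜 := ℝ) (S * A * Sᵀ) x, x⟫ =
      ⟪toEuclideanCLM (𝕜 := ℝ) A (toEuclideanCLM (𝕜 := ℝ) Sᵀ x),
        toEuclideanCLM (𝕜 := ℝ) Sᵀ x⟫ := by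
  rw [map_mul, map_mul, mul_apply_eq_comp, mul_apply_eq_comp,
    toEuclideanCLM_transpose, ContinuousLinearMap.adjoint_inner_right]

lemma Matrix.IsHermitian.toEuclideanCLM_eigenvectorBasis_reindex {n : Type*} [Fintype n]
    [DecidableEq n] {A : Matrix n n ℝ} (hA : A.IsHermitian) (e : Equiv.Perm n) (i : n) :
    toEuclideanCLM (𝕜 := ℝ) A (hA.eigenvectorBasis.reindex e.symm i) =
      (hA.eigenvalues ∘ e) i • hA.eigenvectorBasis.reindex e.symm i := by
  rw [OrthonormalBasis.reindex_apply, Equiv.symm_symm]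
  exact congrArg (WithLp.toLp 2) (hA.mulVec_eigenvectorBasis (e i))

/-- Ostrowski's theorem: for `A` symmetric and `S` nonsingular, if `μ` and `ν` enumerate
the eigenvalues of `A` and of `S A Sᵀ` in nondecreasing order, then for each `j` there is
`ζ_j ∈ [σ_min(S)², σ_max(S)²]`, `ζ_j > 0`, with `λ_j(S A Sᵀ) = ζ_j λ_j(A)`. -/
theorem stmt5 {p : ℕ} (A S : Matrix (Fin p) (Fin p) ℝ)
    (hA : A.IsHermitian) (hS : IsUnit S.det)
    (hSAS : (S * A * Sᵀ).IsHermitian)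
    (μ ν : Fin p → ℝ) (hμmono : Monotone μ) (hνmono : Monotone ν)
    (eμ eν : Equiv.Perm (Fin p))
    (hμ : μ = hA.eigenvalues ∘ eμ) (hν : ν = hSAS.eigenvalues ∘ eν) :
    ∀ j : Fin p, ∃ ζ : ℝ, 0 < ζ ∧ sigmaMin S ^ 2 ≤ ζ ∧ ζ ≤ sigmaMax S ^ 2 ∧
      ν j = ζ * μ j := by
  intro j
  subst hμ hν
  exact exists_eq_mul_of_inner_apply_self_eq
    (hSAS.toEuclideanCLM_eigenvectorBasis_reindex eν) hνmono
    (hA.toEuclideanCLM_eigenvectorBasis_reindex eμ) hμmono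
    (inner_toEuclideanCLM_mul_mul_transpose S A) (sigmaMin_pos j.pos hS)
    (sigmaMin_mul_norm_le_transpose hS) norm_toEuclideanCLM_transpose_le_sigmaMax j
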